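/- Let N be an absolute normalized norm on ℝ². Then (ℝ², N) is positively octahedral if and only if there is a positive (c,d) ∈ ℝ² with N(c,d) = 1 such that N((1,0)+(c,d)) = 2 and N((0,1)+(c,d)) = 2. -/

import Mathlib

/-!
If `N(e + v) = N(e) + N(v)`, then `N` is additive on the whole cone spanned by `e` and `v`; in
particular `N(u + v) = N(u) + N(v)` for every `u` in that cone. Since `v` is positive, the positive
quadrant is the union of the cones spanned by `v` and the two unit vectors, so the single
witness `v` serves every finite family of positive unit vectors at once.
-/

noncomputable section

/-- An absolute normalized norm on `ℝ²`. -/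
structure AbsoluteNormalizedNorm where
  toFun : ℝ × ℝ → ℝ
  add_le : ∀ u v : ℝ × ℝ, toFun (u + v) ≤ toFun u + toFun v
  smul_eq : ∀ (r : ℝ) (u : ℝ × ℝ), toFun (r • u) = |r| * toFun u
  eq_zero : ∀ u : ℝ × ℝ, toFun u = 0 → u = 0
  absolute : ∀ a b : ℝ, toFun (a, b) = toFun (|a|, |b|)
  norm_one_zero : toFun (1, 0) = 1
  norm_zero_one : toFun (0, 1) = 1

/-- `(ℝ², N)` is positively octahedral: for any finite family of positive norm-one
elements there is a positive norm-one `(c,d)` with `N((aᵢ,bᵢ)+(c,d)) = 2` for all `i`. -/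
def PositivelyOctahedral (M : ℝ × ℝ → ℝ) : Prop :=
  ∀ n : ℕ, 0 < n → ∀ u : Fin n → ℝ × ℝ,
    (∀ i, 0 ≤ (u i).1 ∧ 0 ≤ (u i).2 ∧ M (u i) = 1) →
    ∃ v : ℝ × ℝ, 0 ≤ v.1 ∧ 0 ≤ v.2 ∧ M v = 1 ∧ ∀ i, M (u i + v) = 2

namespace Seminorm

variable {E : Type*} [AddCommGroup E] [Module ℝ E] (p : Seminorm ℝ E) {x y : E}

theorem map_smul_add_smul_of_map_add (h : p (x + y) = p x + p y) {a b : ℝ} (ha : 0 ≤ a)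
    (hb : 0 ≤ b) : p (a • x + b • y) = a * p x + b * p y := by
  apply le_antisymm
  · calc p (a • x + b • y) ≤ p (a • x) + p (b • y) := map_add_le_add p _ _
      _ = a * p x + b * p y := by
          simp only [map_smul_eq_mul, Real.norm_eq_abs, abs_of_nonneg ha, abs_of_nonneg hb]
  set m := max a b
  have hm : 0 ≤ m := ha.trans (le_max_left a b)
  have hma : 0 ≤ m - a := sub_nonneg.2 (le_max_left a b)
  have hmb : 0 ≤ m - b := sub_nonneg.2 (le_max_right a b)
  have hsplit : m * (p x + p y) ≤ p (a • x + b • y) + (m - a) * p x + (m - b) * p y :=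
    calc m * (p x + p y) = p (m • (x + y)) := by
          rw [map_smul_eq_mul, Real.norm_eq_abs, abs_of_nonneg hm, h]
      _ = p ((a • x + b • y) + (m - a) • x + (m - b) • y) := by
          congr 1; module
      _ ≤ p (a • x + b • y) + p ((m - a) • x) + p ((m - b) • y) :=
          (map_add_le_add p _ _).trans (add_le_add_left (map_add_le_add p _ _) _)
      _ = p (a • x + b • y) + (m - a) * p x + (m - b) * p y := by
          simp only [map_smul_eq_mul, Real.norm_eq_abs, abs_of_nonneg hma, abs_of_nonneg hmb]
  linarith

theorem map_smul_add_smul_add_of_map_add (h : p (x + y) = p x + p y) {a b : ℝ} (ha : 0 ≤ a)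
    (hb : 0 ≤ b) : p (a • x + b • y + y) = p (a • x + b • y) + p y := by
  have hy : a • x + b • y + y = a • x + (b + 1) • y := by module
  rw [hy, p.map_smul_add_smul_of_map_add h ha hb, p.map_smul_add_smul_of_map_add h ha (by linarith)]
  ring

end Seminorm

namespace Prod

theorem exists_smul_fst_add_smul_of_mul_le {u v : ℝ × ℝ} (hv : 0 < v.2) (hu : 0 ≤ u.2)
    (h : u.2 * v.1 ≤ u.1 * v.2) :
    ∃ a b : ℝ, 0 ≤ a ∧ 0 ≤ b ∧ u = a • ((1, 0) : ℝ × ℝ) + b • v := by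
  refine ⟨(u.1 * v.2 - u.2 * v.1) / v.2, u.2 / v.2, div_nonneg (by linarith) hv.le,
    div_nonneg hu hv.le, ?_⟩
  ext
  · simp only [fst_add, smul_fst, smul_eq_mul]
    field_simp
    ring
  · simp only [snd_add, smul_snd, smul_eq_mul]
    field_simp
    ring

theorem exists_smul_add_smul_of_nonneg {u v : ℝ × ℝ} (hu₁ : 0 ≤ u.1) (hu₂ : 0 ≤ u.2)
    (hv₁ : 0 ≤ v.1) (hv₂ : 0 ≤ v.2) (hv : v ≠ 0) :
    (∃ a b : ℝ, 0 ≤ a ∧ 0 ≤ b ∧ u = a • ((1, 0) : ℝ × ℝ) + b • v) ∨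
      ∃ a b : ℝ, 0 ≤ a ∧ 0 ≤ b ∧ u = a • ((0, 1) : ℝ × ℝ) + b • v := by
  have fst_cone (hv₂ : 0 < v.2) (h : u.2 * v.1 ≤ u.1 * v.2) :=
    exists_smul_fst_add_smul_of_mul_le hv₂ hu₂ h
  have snd_cone (hv₁ : 0 < v.1) (h : u.1 * v.2 ≤ u.2 * v.1) :
      ∃ a b : ℝ, 0 ≤ a ∧ 0 ≤ b ∧ u = a • ((0, 1) : ℝ × ℝ) + b • v := by
    obtain ⟨a, b, ha, hb, hab⟩ := exists_smul_fst_add_smul_of_mul_le (u := u.swap) (v := v.swap)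
      hv₁ hu₁ h
    exact ⟨a, b, ha, hb, swap_injective (by simpa using hab)⟩
  rcases hv₂.lt_or_eq with hv₂ | hv₂
  · rcases hv₁.lt_or_eq with hv₁ | hv₁
    · rcases le_total (u.2 * v.1) (u.1 * v.2) with h | h
      · exact .inl (fst_cone hv₂ h)
      · exact .inr (snd_cone hv₁ h)
    · exact .inl (fst_cone hv₂ (by rw [← hv₁, mul_zero]; positivity))
  · have hv₁ : 0 < v.1 := hv₁.lt_of_ne fun h => hv (Prod.ext h.symm hv₂.symm)
    exact .inr (snd_cone hv₁ (by rw [← hv₂, mul_zero]; positivity))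

end Prod

namespace AbsoluteNormalizedNorm

variable (N : AbsoluteNormalizedNorm)

def toSeminorm : Seminorm ℝ (ℝ × ℝ) := Seminorm.of N.toFun N.add_le N.smul_eq

@[simp]
theorem toSeminorm_apply (u : ℝ × ℝ) : N.toSeminorm u = N.toFun u := rfl

theorem map_add_eq_add_of_nonneg {v : ℝ × ℝ} (hv₁ : 0 ≤ v.1) (hv₂ : 0 ≤ v.2)
    (h₁ : N.toFun ((1, 0) + v) = N.toFun (1, 0) + N.toFun v)
    (h₂ : N.toFun ((0, 1) + v) = N.toFun (0, 1) + N.toFun v)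
    {u : ℝ × ℝ} (hu₁ : 0 ≤ u.1) (hu₂ : 0 ≤ u.2) : N.toFun (u + v) = N.toFun u + N.toFun v := by
  rcases eq_or_ne v 0 with rfl | hv
  · simpa using map_zero N.toSeminorm
  rcases Prod.exists_smul_add_smul_of_nonneg hu₁ hu₂ hv₁ hv₂ hv with
    ⟨a, b, ha, hb, rfl⟩ | ⟨a, b, ha, hb, rfl⟩
  · exact N.toSeminorm.map_smul_add_smul_add_of_map_add h₁ ha hb
  · exact N.toSeminorm.map_smul_add_smul_add_of_map_add h₂ ha hb

end AbsoluteNormalizedNorm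

/-- `(ℝ², N)` is positively octahedral iff there is a positive norm-one `(c,d)` with
`N((1,0)+(c,d)) = 2` and `N((0,1)+(c,d)) = 2`. -/
theorem positivelyOctahedral_iff (N : AbsoluteNormalizedNorm) :
    PositivelyOctahedral N.toFun ↔
      ∃ v : ℝ × ℝ, 0 ≤ v.1 ∧ 0 ≤ v.2 ∧ N.toFun v = 1 ∧
        N.toFun ((1, 0) + v) = 2 ∧ N.toFun ((0, 1) + v) = 2 := by
  constructor
  · intro h
    obtain ⟨v, hv₁, hv₂, hv, hv'⟩ := h 2 two_pos ![(1, 0), (0, 1)] (by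
      intro i
      fin_cases i <;> simp [N.norm_one_zero, N.norm_zero_one])
    exact ⟨v, hv₁, hv₂, hv, by simpa using hv' 0, by simpa using hv' 1⟩
  · rintro ⟨v, hv₁, hv₂, hv, h₁, h₂⟩ n - u hu
    have h₁' : N.toFun ((1, 0) + v) = N.toFun (1, 0) + N.toFun v := by
      rw [h₁, N.norm_one_zero, hv]; norm_num
    have h₂' : N.toFun ((0, 1) + v) = N.toFun (0, 1) + N.toFun v := by
      rw [h₂, N.norm_zero_one, hv]; norm_num
    refine ⟨v, hv₁, hv₂, hv, fun i => ?_⟩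
    rw [N.map_add_eq_add_of_nonneg hv₁ hv₂ h₁' h₂' (hu i).1 (hu i).2.1, (hu i).2.2, hv]
    norm_num
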